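/- Let m > 3 be an integer and G a finite simple graph. Then ε(F_1^m(G)) = (m − 2 + √(m² − 2m + 5)) · ε(G), where ε denotes graph energy. -/

import Mathlib

open Matrix

noncomputable section

/-- The multiplicity of `μ` as an eigenvalue of a real matrix `M`:
the dimension of the kernel of `M - μ·Id`. -/
def eigMult {n : Type} [Fintype n] [DecidableEq n] (M : Matrix n n ℝ) (μ : ℝ) : ℕ :=
  Module.finrank ℝ (LinearMap.ker (Matrix.toLin' (M - μ • (1 : Matrix n n ℝ))))

/-- The energy of a real symmetric matrix: the sum of the absolute values of its
eigenvalues, counted with multiplicity. -/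
def matEnergy {n : Type} [Fintype n] [DecidableEq n] (M : Matrix n n ℝ) : ℝ :=
  if h : M.IsHermitian then ∑ i, |h.eigenvalues i| else 0

/-- The incidence matrix of a graph, rows indexed by vertices, columns by edges. -/
def incid {V : Type} [DecidableEq V] (G : SimpleGraph V) : Matrix V G.edgeSet ℝ :=
  fun v e => if v ∈ (e : Sym2 V) then 1 else 0

/-- Adjacency matrix of the subdivision graph `S(G)`. -/
def AS {V : Type} [DecidableEq V] (G : SimpleGraph V) :
    Matrix (V ⊕ G.edgeSet) (V ⊕ G.edgeSet) ℝ :=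
  Matrix.fromBlocks 0 (incid G) (incid G)ᵀ 0

/-- Adjacency matrix of `S(G)_k`. -/
def ASk {V : Type} [DecidableEq V] (G : SimpleGraph V) (k : ℕ) :
    Matrix (V ⊕ (Fin k × G.edgeSet)) (V ⊕ (Fin k × G.edgeSet)) ℝ :=
  fun x y => match x, y with
    | Sum.inl v, Sum.inr (_, e) => if v ∈ (e : Sym2 V) then 1 else 0
    | Sum.inr (_, e), Sum.inl v => if v ∈ (e : Sym2 V) then 1 else 0
    | _, _ => 0

/-- Adjacency matrix of `S(G)_t^n`. -/
def AStn {V : Type} [DecidableEq V] (G : SimpleGraph V) (n t : ℕ) :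
    Matrix ((Fin (n + 1) × V) ⊕ (Fin (t + 1) × G.edgeSet))
           ((Fin (n + 1) × V) ⊕ (Fin (t + 1) × G.edgeSet)) ℝ :=
  fun x y => match x, y with
    | Sum.inl (_, v), Sum.inr (_, e) => if v ∈ (e : Sym2 V) then 1 else 0
    | Sum.inr (_, e), Sum.inl (_, v) => if v ∈ (e : Sym2 V) then 1 else 0
    | _, _ => 0

/-- The subdivision graph `S(G)` as a simple graph. -/
def SGGraph {V : Type} (G : SimpleGraph V) : SimpleGraph (V ⊕ G.edgeSet) where
  Adj x y :=
    (∃ (v : V) (e : G.edgeSet), x = Sum.inl v ∧ y = Sum.inr e ∧ v ∈ (e : Sym2 V)) ∨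
    (∃ (v : V) (e : G.edgeSet), x = Sum.inr e ∧ y = Sum.inl v ∧ v ∈ (e : Sym2 V))
  symm := by
    constructor
    rintro x y (⟨v, e, rfl, rfl, h⟩ | ⟨v, e, rfl, rfl, h⟩)
    · exact Or.inr ⟨v, e, rfl, rfl, h⟩
    · exact Or.inl ⟨v, e, rfl, rfl, h⟩
  loopless := by
    constructor
    rintro x (⟨v, e, h1, h2, _⟩ | ⟨v, e, h1, h2, _⟩) <;> subst h1 <;> simp_all

/-- The graph `S(G)_k`. -/
def SGkGraph {V : Type} (G : SimpleGraph V) (k : ℕ) :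
    SimpleGraph (V ⊕ (Fin k × G.edgeSet)) where
  Adj x y :=
    (∃ (v : V) (ie : Fin k × G.edgeSet),
        x = Sum.inl v ∧ y = Sum.inr ie ∧ v ∈ (ie.2 : Sym2 V)) ∨
    (∃ (v : V) (ie : Fin k × G.edgeSet),
        x = Sum.inr ie ∧ y = Sum.inl v ∧ v ∈ (ie.2 : Sym2 V))
  symm := by
    constructor
    rintro x y (⟨v, ie, rfl, rfl, h⟩ | ⟨v, ie, rfl, rfl, h⟩)
    · exact Or.inr ⟨v, ie, rfl, rfl, h⟩
    · exact Or.inl ⟨v, ie, rfl, rfl, h⟩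
  loopless := by
    constructor
    rintro x (⟨v, ie, h1, h2, _⟩ | ⟨v, ie, h1, h2, _⟩) <;> subst h1 <;> simp_all

/-- The graph `S(G)_t^n`. -/
def SGtnGraph {V : Type} (G : SimpleGraph V) (n t : ℕ) :
    SimpleGraph ((Fin (n + 1) × V) ⊕ (Fin (t + 1) × G.edgeSet)) where
  Adj x y :=
    (∃ (iv : Fin (n + 1) × V) (je : Fin (t + 1) × G.edgeSet),
        x = Sum.inl iv ∧ y = Sum.inr je ∧ iv.2 ∈ (je.2 : Sym2 V)) ∨
    (∃ (iv : Fin (n + 1) × V) (je : Fin (t + 1) × G.edgeSet),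
        x = Sum.inr je ∧ y = Sum.inl iv ∧ iv.2 ∈ (je.2 : Sym2 V))
  symm := by
    constructor
    rintro x y (⟨iv, je, rfl, rfl, h⟩ | ⟨iv, je, rfl, rfl, h⟩)
    · exact Or.inr ⟨iv, je, rfl, rfl, h⟩
    · exact Or.inl ⟨iv, je, rfl, rfl, h⟩
  loopless := by
    constructor
    rintro x (⟨iv, je, h1, h2, _⟩ | ⟨iv, je, h1, h2, _⟩) <;> subst h1 <;> simp_all

open scoped Classical in
/-- The Randić matrix of a graph: entry `1/√(deg u · deg v)` when `u ~ v`, else `0`. -/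
def randicMatrix {W : Type} (H : SimpleGraph W) : Matrix W W ℝ :=
  fun u v =>
    if H.Adj u v then
      1 / Real.sqrt ((Nat.card (H.neighborSet u) * Nat.card (H.neighborSet v) : ℕ) : ℝ)
    else 0

/-- `H` has no isolated vertices. -/
def NoIsolated {W : Type} (H : SimpleGraph W) : Prop := ∀ v, ∃ u, H.Adj v u

/-- The matrix `B` used in the construction of `F₁^m(G)`: all entries `1`
except `B(1,1) = 0` and `B(i, m+1-i) = 0` for `2 ≤ i ≤ m-1` (1-based indexing). -/
def Bmat (m : ℕ) : Matrix (Fin m) (Fin m) ℝ :=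
  fun i j =>
    if (i.val = 0 ∧ j.val = 0) ∨ (i.val ≠ 0 ∧ j.val ≠ 0 ∧ i.val + j.val = m - 1) then 0 else 1

lemma Bmat_symm (m : ℕ) (i j : Fin m) : Bmat m i j = Bmat m j i := by
  unfold Bmat
  by_cases h : (i.val = 0 ∧ j.val = 0) ∨ (i.val ≠ 0 ∧ j.val ≠ 0 ∧ i.val + j.val = m - 1)
  · rw [if_pos h, if_pos (by omega)]
  · rw [if_neg h, if_neg (by omega)]

/-- The graph `F₁^m(G)`: `(i,u) ~ (j,v)` iff `B(i,j) = 1` and `u ~ v` in `G`. -/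
def F1Graph {V : Type} (m : ℕ) (G : SimpleGraph V) : SimpleGraph (Fin m × V) where
  Adj x y := Bmat m x.1 y.1 = 1 ∧ G.Adj x.2 y.2
  symm := by
    constructor
    rintro x y ⟨hb, ha⟩
    refine ⟨?_, ha.symm⟩
    rw [Bmat_symm]; exact hb
  loopless := ⟨fun x h => G.loopless.irrefl x.2 h.2⟩

/-- The matrix `H` used in the construction of `F₂^m(G)`: all entries `1`
except `H(i,i) = 0` for `2 ≤ i ≤ m` (1-based indexing). -/
def HmatF2 (m : ℕ) : Matrix (Fin m) (Fin m) ℝ :=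
  fun i j => if i.val = j.val ∧ i.val ≠ 0 then 0 else 1

lemma HmatF2_symm (m : ℕ) (i j : Fin m) : HmatF2 m i j = HmatF2 m j i := by
  unfold HmatF2
  by_cases h : i.val = j.val ∧ i.val ≠ 0
  · rw [if_pos h, if_pos (by omega)]
  · rw [if_neg h, if_neg (by omega)]

/-- The graph `F₂^m(G)`: `(i,u) ~ (j,v)` iff `H(i,j) = 1` and `u ~ v` in `G`. -/
def F2Graph {V : Type} (m : ℕ) (G : SimpleGraph V) : SimpleGraph (Fin m × V) where
  Adj x y := HmatF2 m x.1 y.1 = 1 ∧ G.Adj x.2 y.2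
  symm := by
    constructor
    rintro x y ⟨hb, ha⟩
    refine ⟨?_, ha.symm⟩
    rw [HmatF2_symm]; exact hb
  loopless := ⟨fun x h => G.loopless.irrefl x.2 h.2⟩

/-- The tensor (Kronecker) product of simple graphs. -/
def tensorGraph {W U : Type} (H : SimpleGraph W) (G : SimpleGraph U) :
    SimpleGraph (W × U) where
  Adj x y := H.Adj x.1 y.1 ∧ G.Adj x.2 y.2
  symm := ⟨fun _ _ h => ⟨h.1.symm, h.2.symm⟩⟩
  loopless := ⟨fun x h => H.loopless.irrefl x.1 h.1⟩


set_option linter.unusedSectionVars false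

section AuxStmt13
open Polynomial

lemma charmatrix_diag {n : Type} [Fintype n] [DecidableEq n] (d : n → ℝ) :
    charmatrix (Matrix.diagonal d) = Matrix.diagonal (fun i => X - C (d i)) := by
  ext i j
  rcases eq_or_ne i j with rfl | h
  · simp
  · simp [h]

lemma charpoly_PDQ {n : Type} [Fintype n] [DecidableEq n] (P Q : Matrix n n ℝ) (d : n → ℝ)
    (hQP : Q * P = 1) :
    (P * Matrix.diagonal d * Q).charpoly = ∏ i, (X - C (d i)) := by
  have hPQ : P * Q = 1 := mul_eq_one_comm.mpr hQP
  set P' := (C : ℝ →+* ℝ[X]).mapMatrix P with hP'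
  set Q' := (C : ℝ →+* ℝ[X]).mapMatrix Q with hQ'
  have hcomm : P' * Matrix.scalar n (X : ℝ[X]) = Matrix.scalar n (X : ℝ[X]) * P' :=
    ((scalar_commute (X : ℝ[X]) (fun r => Commute.all _ _) P')).symm.eq
  have key : charmatrix (P * Matrix.diagonal d * Q)
      = P' * charmatrix (Matrix.diagonal d) * Q' := by
    rw [charmatrix, charmatrix, mul_sub, sub_mul]
    congr 1
    · rw [hcomm, mul_assoc, hP', hQ', ← _root_.map_mul ((C : ℝ →+* ℝ[X]).mapMatrix) P Q, hPQ,
        _root_.map_one, mul_one]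
    · rw [hP', hQ', ← _root_.map_mul, ← _root_.map_mul]
  have hdet : det Q' * det P' = 1 := by
    rw [← det_mul, hP', hQ', ← _root_.map_mul ((C : ℝ →+* ℝ[X]).mapMatrix) Q P, hQP,
      _root_.map_one, det_one]
  have h2 : (P * Matrix.diagonal d * Q).charpoly = (Matrix.diagonal d).charpoly := by
    rw [Matrix.charpoly, Matrix.charpoly, key, det_mul, det_mul]
    linear_combination (det (charmatrix (Matrix.diagonal d))) * hdet
  rw [h2, Matrix.charpoly, charmatrix_diag, det_diagonal]

lemma ofReal_comp (n : Type) (f : n → ℝ) : (RCLike.ofReal ∘ f : n → ℝ) = f := by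
  ext i; simp [RCLike.ofReal]

lemma charpoly_isHermitian {n : Type} [Fintype n] [DecidableEq n] {M : Matrix n n ℝ}
    (hM : M.IsHermitian) :
    M.charpoly = ∏ i, (X - C (hM.eigenvalues i)) := by
  have h := hM.spectral_theorem
  rw [ofReal_comp] at h
  conv_lhs => rw [h]
  exact charpoly_PDQ _ _ _ (Unitary.coe_star_mul_self (hM.eigenvectorUnitary))

lemma sum_abs_eq_of_prod_eq {n n' : Type} [Fintype n] [Fintype n'] (e : n → ℝ) (d : n' → ℝ)
    (h : ∏ i, (X - C (e i)) = ∏ i, (X - C (d i))) :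
    ∑ i, |e i| = ∑ i, |d i| := by
  have key : ∀ {m : Type} [Fintype m] (f : m → ℝ),
      (∏ i, (X - C (f i))).roots = Finset.univ.val.map f := by
    intro m _ f
    rw [Finset.prod, show (fun i => X - C (f i)) = ((fun a => X - C a) ∘ f) from rfl,
      ← Multiset.map_map, roots_multiset_prod_X_sub_C]
  have h1 : (Finset.univ.val.map e) = (Finset.univ.val.map d) := by
    rw [← key e, ← key d, h]
  show (Finset.univ.val.map fun i => |e i|).sum = (Finset.univ.val.map fun i => |d i|).sum
  rw [show (fun i => |e i|) = (abs ∘ e) from rfl, show (fun i => |d i|) = (abs ∘ d) from rfl,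
    ← Multiset.map_map, ← Multiset.map_map, h1]

lemma matEnergy_eq {n : Type} [Fintype n] [DecidableEq n] {M : Matrix n n ℝ}
    (hM : M.IsHermitian) : matEnergy M = ∑ i, |hM.eigenvalues i| := dif_pos hM

lemma kronecker_isHermitian {n p : Type} [Fintype n] [DecidableEq n] [Fintype p] [DecidableEq p]
    {Bm : Matrix n n ℝ} {Am : Matrix p p ℝ} (hB : Bm.IsHermitian) (hA : Am.IsHermitian) :
    (Matrix.kroneckerMap (· * ·) Bm Am).IsHermitian := by
  ext ⟨i, u⟩ ⟨j, v⟩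
  simp only [conjTranspose_apply, kroneckerMap_apply, star_trivial]
  have h1 : Bm j i = Bm i j := by simpa using hB.apply i j
  have h2 : Am v u = Am u v := by simpa using hA.apply u v
  rw [h1, h2]

lemma matEnergy_kronecker {n p : Type} [Fintype n] [DecidableEq n] [Fintype p] [DecidableEq p]
    (Bm : Matrix n n ℝ) (Am : Matrix p p ℝ) (hB : Bm.IsHermitian) (hA : Am.IsHermitian) :
    matEnergy (Matrix.kroneckerMap (· * ·) Bm Am)
      = (∑ i, |hB.eigenvalues i|) * matEnergy Am := by
  have hK := kronecker_isHermitian hB hA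
  set U : Matrix n n ℝ := (hB.eigenvectorUnitary : Matrix n n ℝ) with hU
  set W : Matrix p p ℝ := (hA.eigenvectorUnitary : Matrix p p ℝ) with hW
  have hBdec : Bm = U * Matrix.diagonal hB.eigenvalues * star U := by
    have := hB.spectral_theorem; rwa [ofReal_comp] at this
  have hAdec : Am = W * Matrix.diagonal hA.eigenvalues * star W := by
    have := hA.spectral_theorem; rwa [ofReal_comp] at this
  have hKdec : Matrix.kroneckerMap (· * ·) Bm Am
      = (Matrix.kroneckerMap (· * ·) U W)
        * Matrix.diagonal (fun ij : n × p => hB.eigenvalues ij.1 * hA.eigenvalues ij.2)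
        * (Matrix.kroneckerMap (· * ·) (star U) (star W)) := by
    conv_lhs => rw [hBdec, hAdec]
    rw [Matrix.mul_kronecker_mul, Matrix.mul_kronecker_mul,
      Matrix.diagonal_kronecker_diagonal]
  have hQP : (Matrix.kroneckerMap (· * ·) (star U) (star W))
      * (Matrix.kroneckerMap (· * ·) U W) = 1 := by
    rw [← Matrix.mul_kronecker_mul, hU, hW, Unitary.coe_star_mul_self,
      Unitary.coe_star_mul_self, Matrix.one_kronecker_one]
  have hchar := charpoly_isHermitian hK
  have hchar2 := charpoly_PDQ (Matrix.kroneckerMap (· * ·) U W)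
    (Matrix.kroneckerMap (· * ·) (star U) (star W))
    (fun ij : n × p => hB.eigenvalues ij.1 * hA.eigenvalues ij.2) hQP
  rw [← hKdec] at hchar2
  have hsum := sum_abs_eq_of_prod_eq _ _ (hchar.symm.trans hchar2)
  rw [matEnergy_eq hK, matEnergy_eq hA, hsum, Fintype.sum_prod_type]
  rw [Finset.sum_mul]
  congr 1; ext i
  rw [Finset.mul_sum]
  congr 1; ext j
  rw [abs_mul]

-- helper matrix lemmas
lemma vMv_mul {n : Type} [Fintype n] (x y : n → ℝ) (M : Matrix n n ℝ) :
    vecMulVec x y * M = vecMulVec x (y ᵥ* M) := by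
  ext i j
  simp only [mul_apply, vecMulVec_apply, vecMul, dotProduct, Finset.mul_sum]
  exact Finset.sum_congr rfl fun k _ => by ring

lemma mul_vMv {n : Type} [Fintype n] (M : Matrix n n ℝ) (x y : n → ℝ) :
    M * vecMulVec x y = vecMulVec (M *ᵥ x) y := by
  ext i j
  simp only [mul_apply, vecMulVec_apply, mulVec, dotProduct, Finset.sum_mul]
  exact Finset.sum_congr rfl fun k _ => by ring

lemma vMv_vMv {n : Type} [Fintype n] (x y z w : n → ℝ) :
    vecMulVec x y * vecMulVec z w = (y ⬝ᵥ z) • vecMulVec x w := by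
  ext i j
  simp only [mul_apply, vecMulVec_apply, Matrix.smul_apply, dotProduct, Finset.sum_mul, smul_eq_mul]
  exact Finset.sum_congr rfl fun k _ => by ring

lemma vMv_sub_left {n : Type} (x y z : n → ℝ) :
    vecMulVec (x - y) z = vecMulVec x z - vecMulVec y z := by
  ext i j; simp only [vecMulVec_apply, Matrix.sub_apply, Pi.sub_apply]; ring

lemma vMv_sub_right {n : Type} (x y z : n → ℝ) :
    vecMulVec x (y - z) = vecMulVec x y - vecMulVec x z := by
  ext i j; simp only [vecMulVec_apply, Matrix.sub_apply, Pi.sub_apply]; ring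

lemma vMv_zero_right {n : Type} (x : n → ℝ) : vecMulVec x (0 : n → ℝ) = 0 := by
  ext i j; simp [vecMulVec_apply]

lemma vecMul_vMv {n : Type} [Fintype n] (x z w : n → ℝ) :
    x ᵥ* vecMulVec z w = (x ⬝ᵥ z) • w := by
  funext j
  simp only [vecMul, dotProduct, vecMulVec_apply, Pi.smul_apply, smul_eq_mul, Finset.sum_mul]
  exact Finset.sum_congr rfl fun k _ => by ring

lemma vMv_smul_right {n : Type} (c : ℝ) (x y : n → ℝ) :
    vecMulVec x (c • y) = c • vecMulVec x y := by
  ext i j; simp only [vecMulVec_apply, Matrix.smul_apply, Pi.smul_apply, smul_eq_mul]; ring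

lemma trace_vMv {n : Type} [Fintype n] (x y : n → ℝ) :
    Matrix.trace (vecMulVec x y) = x ⬝ᵥ y := by
  simp [Matrix.trace, vecMulVec_apply, dotProduct, Matrix.diag]

section BS
variable (m : ℕ)

def eB : Fin m → ℝ := fun i => if i.val = m - 1 then 1 else 0
def oB : Fin m → ℝ := fun _ => 1
def uB : Fin m → ℝ := fun i => if i.val = m - 1 then 0 else 1
def EmatB : Matrix (Fin m) (Fin m) ℝ :=
  fun i j =>
    if (i.val = 0 ∧ j.val = 0) ∨ (i.val ≠ 0 ∧ j.val ≠ 0 ∧ i.val + j.val = m - 1) then 1 else 0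

def wB {m : ℕ} (i : Fin m) : Fin m :=
  ⟨if i.val = 0 then 0 else m - 1 - i.val, by have h := i.isLt; split <;> omega⟩

variable {m}

lemma uB_eq : uB m = oB m - eB m := by
  funext i; simp only [uB, oB, eB, Pi.sub_apply]; split <;> norm_num

lemma hB1 : Bmat m = vecMulVec (oB m) (oB m) - EmatB m := by
  ext i j
  simp only [Bmat, EmatB, Matrix.sub_apply, vecMulVec_apply, oB]
  split <;> norm_num

variable (hm : 3 < m)
include hm

lemma hErow (i : Fin m) (hi : i.val ≠ m - 1) (j : Fin m) :
    EmatB m i j = if j = wB i then 1 else 0 := by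
  simp only [EmatB]
  by_cases h : j = wB i
  · subst h
    rw [if_pos, if_pos rfl]
    by_cases h0 : i.val = 0
    · left; exact ⟨h0, by simp [wB, h0]⟩
    · right
      refine ⟨h0, ?_, ?_⟩ <;> simp only [wB, if_neg h0] <;>
        (try intro hc) <;> (have := i.isLt; omega)
  · rw [if_neg, if_neg h]
    intro hc
    apply h
    apply Fin.ext
    simp only [wB]
    rcases hc with ⟨h1, h2⟩ | ⟨h1, h2, h3⟩
    · simp [h1, h2]
    · rw [if_neg h1]; omega

lemma hErow' (i : Fin m) (hi : i.val = m - 1) (j : Fin m) : EmatB m i j = 0 := by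
  simp only [EmatB]
  rw [if_neg]
  rintro (⟨h1, h2⟩ | ⟨h1, h2, h3⟩) <;> (have := j.isLt; omega)

lemma hEsymm (i j : Fin m) : EmatB m i j = EmatB m j i := by
  simp only [EmatB]
  by_cases h : (i.val = 0 ∧ j.val = 0) ∨ (i.val ≠ 0 ∧ j.val ≠ 0 ∧ i.val + j.val = m - 1)
  · rw [if_pos h, if_pos (by omega)]
  · rw [if_neg h, if_neg (by omega)]

lemma hEt : (EmatB m)ᵀ = EmatB m := by
  ext i j; exact hEsymm hm j i

lemma hEo : EmatB m *ᵥ oB m = uB m := by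
  funext i
  simp only [mulVec, dotProduct, oB, mul_one, uB]
  by_cases hi : i.val = m - 1
  · rw [if_pos hi]
    exact Finset.sum_eq_zero fun j _ => hErow' hm i hi j
  · rw [if_neg hi]
    calc ∑ j, EmatB m i j = ∑ j, if j = wB i then 1 else 0 :=
          Finset.sum_congr rfl fun j _ => hErow hm i hi j
    _ = 1 := by rw [Finset.sum_ite_eq' Finset.univ (wB i) (fun _ => (1:ℝ))]; simp

lemma hoE : oB m ᵥ* EmatB m = uB m := by
  rw [← hEt hm, vecMul_transpose, hEo hm]

lemma hEee : EmatB m *ᵥ eB m = 0 := by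
  funext i
  simp only [mulVec, dotProduct, Pi.zero_apply]
  apply Finset.sum_eq_zero
  intro j _
  by_cases hj : j.val = m - 1
  · have : EmatB m i j = 0 := by
      rw [hEsymm hm]; exact hErow' hm j hj i
    rw [this, zero_mul]
  · simp [eB, hj]

lemma heeE : eB m ᵥ* EmatB m = 0 := by rw [← hEt hm, vecMul_transpose, hEee hm]

lemma huE : uB m ᵥ* EmatB m = uB m := by
  conv_lhs => rw [uB_eq, sub_vecMul, hoE hm, heeE hm, sub_zero]

lemma hwB (i : Fin m) (hi : i.val ≠ m - 1) (j : Fin m) :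
    EmatB m (wB i) j = if i = j then 1 else 0 := by
  simp only [EmatB]
  by_cases h : i = j
  · subst h
    rw [if_pos rfl, if_pos]
    by_cases h0 : i.val = 0
    · left; exact ⟨by simp [wB, h0], h0⟩
    · right
      refine ⟨?_, h0, ?_⟩ <;> simp only [wB, if_neg h0] <;>
        (try intro hc) <;> (have := i.isLt; omega)
  · rw [if_neg h, if_neg]
    rintro (⟨h1, h2⟩ | ⟨h1, h2, h3⟩)
    · apply h; apply Fin.ext
      by_cases h0 : i.val = 0 <;>
        simp only [wB, h0, reduceIte, if_true, if_false] at h1 ⊢ <;>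
        (have := i.isLt; omega)
    · apply h; apply Fin.ext
      by_cases h0 : i.val = 0 <;>
        simp only [wB, h0, reduceIte, if_true, if_false] at h1 h3 ⊢ <;>
        (have := i.isLt; omega)

lemma hEE : EmatB m * EmatB m = 1 - vecMulVec (eB m) (eB m) := by
  ext i j
  simp only [mul_apply, Matrix.sub_apply, one_apply, vecMulVec_apply, eB]
  by_cases hi : i.val = m - 1
  · have hz : ∀ k, EmatB m i k = 0 := hErow' hm i hi
    rw [Finset.sum_eq_zero fun k _ => by rw [hz k, zero_mul]]
    by_cases h : i = j
    · subst h; rw [if_pos rfl, if_pos hi]; ring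
    · have hj : ¬ j.val = m - 1 := fun hj => h (Fin.ext (by omega))
      rw [if_neg h, if_neg hj]; ring
  · have hterm : ∀ k ∈ Finset.univ,
        EmatB m i k * EmatB m k j = if k = wB i then EmatB m k j else 0 := by
      intro k _
      rw [hErow hm i hi k]
      split <;> simp
    rw [Finset.sum_congr rfl hterm, Finset.sum_ite_eq' Finset.univ (wB i)
      (fun k => EmatB m k j), if_pos (Finset.mem_univ _), hwB hm i hi j,
      if_neg hi, zero_mul, sub_zero]


lemma lastIdx (i : Fin m) : (i.val = m - 1) ↔ i = ⟨m - 1, by omega⟩ := by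
  constructor
  · intro h; exact Fin.ext h
  · intro h; rw [h]

lemma sum_eB : ∑ i, eB m i = 1 := by
  have : ∀ i ∈ Finset.univ, eB m i = if i = (⟨m - 1, by omega⟩ : Fin m) then (1:ℝ) else 0 := by
    intro i _
    simp only [eB]
    by_cases h : i.val = m - 1
    · rw [if_pos h, if_pos ((lastIdx hm i).mp h)]
    · rw [if_neg h, if_neg (fun hc => h ((lastIdx hm i).mpr hc))]
  rw [Finset.sum_congr rfl this, Finset.sum_ite_eq' Finset.univ _ (fun _ => (1:ℝ))]
  simp

lemma doo : oB m ⬝ᵥ oB m = (m:ℝ) := by simp [dotProduct, oB]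

lemma dou : oB m ⬝ᵥ uB m = (m:ℝ) - 1 := by
  have : oB m ⬝ᵥ uB m = ∑ i, (oB m i - eB m i) := by
    rw [uB_eq]; simp [dotProduct, oB]
  rw [this, Finset.sum_sub_distrib, sum_eB hm]
  simp [oB]

lemma duu : uB m ⬝ᵥ uB m = (m:ℝ) - 1 := by
  have h1 : uB m ⬝ᵥ uB m = oB m ⬝ᵥ uB m := by
    apply Finset.sum_congr rfl
    intro i _
    simp only [uB, oB]
    split <;> norm_num
  rw [h1, dou hm]

lemma deu : eB m ⬝ᵥ uB m = 0 := by
  apply Finset.sum_eq_zero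
  intro i _
  simp only [eB, uB]
  split <;> norm_num

lemma dee : eB m ⬝ᵥ eB m = 1 := by
  have : ∀ i ∈ Finset.univ, eB m i * eB m i = eB m i := by
    intro i _; simp only [eB]; split <;> norm_num
  rw [dotProduct, Finset.sum_congr rfl this, sum_eB hm]

lemma hBB : Bmat m * Bmat m
    = (m:ℝ) • vecMulVec (oB m) (oB m) - vecMulVec (oB m) (uB m) - vecMulVec (uB m) (oB m)
      + (1 - vecMulVec (eB m) (eB m)) := by
  rw [hB1, sub_mul, mul_sub, mul_sub, vMv_vMv, doo hm, vMv_mul, hoE hm, mul_vMv, hEo hm,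
    hEE hm]
  abel

lemma hS : Bmat m * Bmat m - ((m:ℝ) - 1) • Bmat m - 1
    = ((m:ℝ) - 1) • EmatB m - vecMulVec (uB m) (uB m) := by
  rw [hBB hm, hB1, uB_eq]
  simp only [vMv_sub_left, vMv_sub_right, smul_sub]
  module

lemma hT : Bmat m * Bmat m - 1
    = (m:ℝ) • vecMulVec (oB m) (oB m) - vecMulVec (oB m) (uB m) - vecMulVec (uB m) (oB m)
      - vecMulVec (eB m) (eB m) := by
  rw [hBB hm]; abel

lemma hTS : (Bmat m * Bmat m - 1) * (Bmat m * Bmat m - ((m:ℝ) - 1) • Bmat m - 1) = 0 := by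
  rw [hS hm, hT hm]
  simp only [mul_sub, sub_mul, smul_mul_assoc, mul_smul_comm, vMv_mul, vecMul_vMv,
    hoE hm, huE hm, heeE hm, vMv_zero_right, dou hm, duu hm, deu hm, vMv_smul_right,
    zero_smul, vMv_zero_right]
  module

lemma htr2 : Matrix.trace (Bmat m * Bmat m) = (m:ℝ)^2 - m + 1 := by
  rw [hBB hm, trace_add, trace_sub, trace_sub, trace_smul, trace_sub, trace_one,
    trace_vMv, trace_vMv, trace_vMv, trace_vMv, doo hm, dou hm, dee hm]
  rw [show uB m ⬝ᵥ oB m = (m:ℝ) - 1 from by rw [dotProduct_comm, dou hm]]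
  simp only [smul_eq_mul, Fintype.card_fin]
  ring

lemma htr1 : ∃ z : ℤ, Matrix.trace (Bmat m) = (z:ℝ) := by
  refine ⟨∑ i : Fin m,
    if (i.val = 0 ∧ i.val = 0) ∨ (i.val ≠ 0 ∧ i.val ≠ 0 ∧ i.val + i.val = m - 1)
    then 0 else 1, ?_⟩
  have key : ∀ i ∈ Finset.univ, Matrix.diag (Bmat m) i
      = ((if (i.val = 0 ∧ i.val = 0) ∨ (i.val ≠ 0 ∧ i.val ≠ 0 ∧ i.val + i.val = m - 1)
          then (0:ℤ) else 1 : ℤ) : ℝ) := by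
    intro i _; simp only [Matrix.diag, Bmat]; split <;> norm_num
  rw [Matrix.trace, Finset.sum_congr rfl key, ← Int.cast_sum]

end BS

lemma Bmat_symm' (m : ℕ) (i j : Fin m) : Bmat m i j = Bmat m j i := by
  unfold Bmat
  by_cases h : (i.val = 0 ∧ j.val = 0) ∨ (i.val ≠ 0 ∧ j.val ≠ 0 ∧ i.val + j.val = m - 1)
  · rw [if_pos h, if_pos (by omega)]
  · rw [if_neg h, if_neg (by omega)]

lemma Bmat_isHermitian (m : ℕ) : (Bmat m).IsHermitian := by
  ext i j
  simp only [conjTranspose_apply, star_trivial]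
  exact Bmat_symm' m j i

lemma trace_PDQ {n : Type} [Fintype n] [DecidableEq n] (P Q : Matrix n n ℝ) (d : n → ℝ)
    (hQP : Q * P = 1) : (P * Matrix.diagonal d * Q).trace = ∑ i, d i := by
  rw [trace_mul_comm, ← mul_assoc, hQP, one_mul, trace_diagonal]

lemma sq_PDQ {n : Type} [Fintype n] [DecidableEq n] (P Q : Matrix n n ℝ) (d : n → ℝ)
    (hQP : Q * P = 1) :
    (P * Matrix.diagonal d * Q) * (P * Matrix.diagonal d * Q)
      = P * Matrix.diagonal (fun i => d i * d i) * Q := by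
  rw [mul_assoc (P * Matrix.diagonal d) Q (P * Matrix.diagonal d * Q),
    ← mul_assoc Q (P * Matrix.diagonal d) Q, ← mul_assoc Q P (Matrix.diagonal d), hQP, one_mul,
    ← mul_assoc (P * Matrix.diagonal d) (Matrix.diagonal d) Q,
    mul_assoc P (Matrix.diagonal d) (Matrix.diagonal d), diagonal_mul_diagonal]

lemma ofReal_comp' (n : Type) (f : n → ℝ) : (RCLike.ofReal ∘ f : n → ℝ) = f := by
  ext i; simp [RCLike.ofReal]

lemma eigen_sum {n : Type} [Fintype n] [DecidableEq n] {M : Matrix n n ℝ} (hM : M.IsHermitian) :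
    ∑ i, hM.eigenvalues i = M.trace := by
  have h := hM.spectral_theorem
  rw [ofReal_comp', Unitary.conjStarAlgAut_apply] at h
  conv_rhs => rw [h]
  rw [trace_PDQ _ _ _ (Unitary.coe_star_mul_self (hM.eigenvectorUnitary))]

lemma eigen_sq_sum {n : Type} [Fintype n] [DecidableEq n] {M : Matrix n n ℝ}
    (hM : M.IsHermitian) :
    ∑ i, (hM.eigenvalues i)^2 = (M * M).trace := by
  have h := hM.spectral_theorem
  rw [ofReal_comp', Unitary.conjStarAlgAut_apply] at h
  conv_rhs => rw [h, sq_PDQ _ _ _ (Unitary.coe_star_mul_self (hM.eigenvectorUnitary)),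
    trace_PDQ _ _ _ (Unitary.coe_star_mul_self (hM.eigenvectorUnitary))]
  exact Finset.sum_congr rfl fun i _ => sq (hM.eigenvalues i) ▸ (sq (hM.eigenvalues i)).symm ▸ rfl

lemma quartic {m : ℕ} (hm : 3 < m) (i : Fin m) :
    (((Bmat_isHermitian m).eigenvalues i)^2 - 1)
      * (((Bmat_isHermitian m).eigenvalues i)^2
          - ((m:ℝ) - 1) * ((Bmat_isHermitian m).eigenvalues i) - 1) = 0 := by
  set hB := Bmat_isHermitian m
  set μ := hB.eigenvalues i with hμ
  set v : Fin m → ℝ := ⇑(hB.eigenvectorBasis i) with hv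
  have hBv : Bmat m *ᵥ v = μ • v := hB.mulVec_eigenvectorBasis i
  have hvne : v ≠ 0 := by
    intro h
    have h1 := hB.eigenvectorBasis.orthonormal.1 i
    have : (hB.eigenvectorBasis i : EuclideanSpace ℝ (Fin m)) = 0 := by
      apply PiLp.ext; intro j; exact congrFun h j
    rw [this, norm_zero] at h1
    norm_num at h1
  have h2 : (Bmat m * Bmat m) *ᵥ v = (μ^2) • v := by
    rw [← mulVec_mulVec, hBv, mulVec_smul, hBv, smul_smul, ← sq]
  have hSv : (Bmat m * Bmat m - ((m:ℝ) - 1) • Bmat m - 1) *ᵥ v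
      = (μ^2 - ((m:ℝ) - 1) * μ - 1) • v := by
    rw [sub_mulVec, sub_mulVec, h2, smul_mulVec, hBv, one_mulVec]
    module
  have h0 : (Bmat m * Bmat m - 1) *ᵥ ((μ^2 - ((m:ℝ) - 1) * μ - 1) • v) = 0 := by
    rw [← hSv, mulVec_mulVec, hTS hm, zero_mulVec]
  rw [mulVec_smul, sub_mulVec, h2, one_mulVec, smul_sub, smul_smul, ← sub_smul] at h0
  rcases smul_eq_zero.mp h0 with h | h
  · linear_combination h
  · exact absurd h hvne

lemma sum_abs_eigen {m : ℕ} (hm : 3 < m) :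
    ∑ i, |(Bmat_isHermitian m).eigenvalues i|
      = (m:ℝ) - 2 + Real.sqrt ((m:ℝ)^2 - 2*(m:ℝ) + 5) := by
  classical
  set e := (Bmat_isHermitian m).eigenvalues with he
  have hm4 : (4:ℝ) ≤ (m:ℝ) := by exact_mod_cast hm
  set s := Real.sqrt ((m:ℝ)^2 - 2*(m:ℝ) + 5) with hs
  have hΔ : (0:ℝ) ≤ (m:ℝ)^2 - 2*(m:ℝ) + 5 := by nlinarith
  have hs2 : s^2 = (m:ℝ)^2 - 2*(m:ℝ) + 5 := Real.sq_sqrt hΔ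
  have hsgt : (m:ℝ) - 1 < s := by
    rw [hs]; exact (Real.lt_sqrt (by linarith)).mpr (by nlinarith)
  have hslt : s < (m:ℝ) + 1 := by
    rw [hs]; exact (Real.sqrt_lt' (by linarith)).mpr (by nlinarith)
  set lp := ((m:ℝ) - 1 + s)/2 with hlp
  set lm := ((m:ℝ) - 1 - s)/2 with hlm
  have hlp1 : 1 < lp := by rw [hlp]; linarith
  have hlm0 : lm < 0 := by rw [hlm]; linarith
  have hlm1 : -1 < lm := by rw [hlm]; linarith
  have hsum : lp + lm = (m:ℝ) - 1 := by rw [hlp, hlm]; ring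
  have hdiff : lp - lm = s := by rw [hlp, hlm]; ring
  have hroots : ∀ i, e i = 1 ∨ e i = -1 ∨ e i = lp ∨ e i = lm := by
    intro i
    have h := quartic hm i
    rw [← he] at h
    have hfac : (e i^2 - 1) * (e i^2 - ((m:ℝ)-1)*(e i) - 1)
        = (e i - 1) * ((e i + 1) * ((e i - lp) * (e i - lm))) := by
      rw [hlp, hlm]; linear_combination (((e i) - 1) * ((e i) + 1) / 4) * hs2
    rw [hfac] at h
    rcases mul_eq_zero.mp h with h' | h'
    · left; linarith [sub_eq_zero.mp h']
    rcases mul_eq_zero.mp h' with h'' | h''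
    · right; left; linarith [eq_neg_of_add_eq_zero_left h'']
    rcases mul_eq_zero.mp h'' with h3 | h3
    · right; right; left; exact sub_eq_zero.mp h3
    · right; right; right; exact sub_eq_zero.mp h3
  obtain ⟨z, hz⟩ := htr1 hm
  have h1 : ∑ i, e i = (z:ℝ) := by rw [he, eigen_sum (Bmat_isHermitian m), hz]
  have h2 : ∑ i, (e i)^2 = (m:ℝ)^2 - (m:ℝ) + 1 := by
    rw [he, eigen_sq_sum (Bmat_isHermitian m), htr2 hm]
  set R1 := Finset.univ.filter (fun i : Fin m => ¬ e i = 1) with hR1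
  set A1 := Finset.univ.filter (fun i : Fin m => e i = 1) with hA1
  set A2 := R1.filter (fun i => e i = -1) with hA2
  set R2 := R1.filter (fun i => ¬ e i = -1) with hR2
  set A3 := R2.filter (fun i => e i = lp) with hA3
  set A4 := R2.filter (fun i => ¬ e i = lp) with hA4
  have key : ∀ f : ℝ → ℝ, ∑ i, f (e i)
      = (A1.card:ℝ) * f 1 + (A2.card:ℝ) * f (-1) + (A3.card:ℝ) * f lp
        + (A4.card:ℝ) * f lm := by
    intro f
    have e1 : ∀ i ∈ A1, f (e i) = f 1 := fun i hi => by
      rw [(Finset.mem_filter.mp hi).2]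
    have e2 : ∀ i ∈ A2, f (e i) = f (-1) := fun i hi => by
      rw [(Finset.mem_filter.mp hi).2]
    have e3 : ∀ i ∈ A3, f (e i) = f lp := fun i hi => by
      rw [(Finset.mem_filter.mp hi).2]
    have e4 : ∀ i ∈ A4, f (e i) = f lm := fun i hi => by
      obtain ⟨hi2, hi3⟩ := Finset.mem_filter.mp hi
      obtain ⟨hi4, hi5⟩ := Finset.mem_filter.mp hi2
      obtain ⟨_, hi6⟩ := Finset.mem_filter.mp hi4
      rcases hroots i with h | h | h | h
      · exact absurd h hi6
      · exact absurd h hi5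
      · exact absurd h hi3
      · rw [h]
    calc ∑ i, f (e i)
        = ∑ i ∈ A1, f (e i) + ∑ i ∈ R1, f (e i) :=
          (Finset.sum_filter_add_sum_filter_not _ _ _).symm
      _ = ∑ i ∈ A1, f (e i) + (∑ i ∈ A2, f (e i) + ∑ i ∈ R2, f (e i)) := by
          rw [Finset.sum_filter_add_sum_filter_not R1 (fun i => e i = -1)]
      _ = ∑ i ∈ A1, f (e i) + (∑ i ∈ A2, f (e i)
            + (∑ i ∈ A3, f (e i) + ∑ i ∈ A4, f (e i))) := by
          rw [Finset.sum_filter_add_sum_filter_not R2 (fun i => e i = lp)]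
      _ = (A1.card:ℝ) * f 1 + (A2.card:ℝ) * f (-1) + (A3.card:ℝ) * f lp
            + (A4.card:ℝ) * f lm := by
          rw [Finset.sum_congr rfl e1, Finset.sum_congr rfl e2, Finset.sum_congr rfl e3,
            Finset.sum_congr rfl e4, Finset.sum_const, Finset.sum_const, Finset.sum_const,
            Finset.sum_const]
          simp only [nsmul_eq_mul]
          ring
  have k0 : (A1.card:ℝ) + A2.card + A3.card + A4.card = m := by
    have := key (fun _ => (1:ℝ))
    simp only [mul_one, Finset.sum_const, Finset.card_univ, Fintype.card_fin,
      nsmul_eq_mul] at this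
    linarith
  have k1 : (A1.card:ℝ) - A2.card + A3.card * lp + A4.card * lm = z := by
    have := key (fun x => x)
    rw [h1] at this
    linarith
  have k2 : (A1.card:ℝ) + A2.card + A3.card * lp^2 + A4.card * lm^2
      = (m:ℝ)^2 - (m:ℝ) + 1 := by
    have := key (fun x => x^2)
    rw [h2] at this
    rw [this]; norm_num
  -- c = d via irrationality
  have hcd : A3.card = A4.card := by
    by_contra hne
    have hne' : (A3.card:ℝ) - A4.card ≠ 0 := by
      intro h; exact hne (by exact_mod_cast sub_eq_zero.mp h)
    have hsval : s = (2*((z:ℝ) - A1.card + A2.card) - ((A3.card:ℝ) + A4.card)*((m:ℝ)-1))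
        / ((A3.card:ℝ) - A4.card) := by
      rw [eq_div_iff hne']
      rw [hlp, hlm] at k1
      linear_combination 2 * k1
    have hirr : Irrational s := by
      rw [hs]
      have hcast : ((m:ℝ)^2 - 2*(m:ℝ) + 5) = (((m-1)^2 + 4 : ℕ) : ℝ) := by
        have hc1 : ((m - 1 : ℕ) : ℝ) = (m:ℝ) - 1 := by
          have h1m : (1:ℕ) ≤ m := by omega
          push_cast [h1m]
          ring
        push_cast [hc1]
        ring
      rw [hcast]
      apply irrational_sqrt_natCast_iff.mpr
      rintro ⟨k, hk⟩
      have hk1 : m - 1 < k := by nlinarith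
      have hk2 : k < m := by nlinarith
      omega
    exact hirr ⟨(2*((z:ℚ) - A1.card + A2.card) - ((A3.card:ℚ) + A4.card)*((m:ℚ)-1))
        / ((A3.card:ℚ) - A4.card), by rw [hsval]; push_cast; ring⟩
  have hcdR : (A3.card:ℝ) = A4.card := by exact_mod_cast hcd
  have hlpsq : lp^2 = ((m:ℝ)-1)*lp + 1 := by
    rw [hlp]; linear_combination hs2 / 4
  have hlmsq : lm^2 = ((m:ℝ)-1)*lm + 1 := by
    rw [hlm]; linear_combination hs2 / 4
  rw [hlpsq, hlmsq, hcdR] at k2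
  rw [hcdR] at k0 k1
  have hd1 : (A4.card:ℝ) = 1 := by
    have hkey : (A4.card:ℝ) * ((m:ℝ)-1)^2 = ((m:ℝ)-1)^2 := by
      linear_combination k2 - k0 - (A4.card:ℝ)*((m:ℝ)-1)*hsum
    have hne : ((m:ℝ)-1)^2 ≠ 0 := pow_ne_zero 2 (ne_of_gt (by linarith : (0:ℝ) < (m:ℝ)-1))
    have := mul_right_cancel₀ hne (hkey.trans (one_mul (((m:ℝ)-1)^2)).symm)
    exact this
  have kabs := key abs
  rw [abs_one, abs_neg, abs_one, abs_of_pos (by linarith : (0:ℝ) < lp),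
    abs_of_neg hlm0] at kabs
  rw [kabs, hcdR]
  linear_combination k0 + hdiff + (lp - 1 - lm - 1) * hd1

end AuxStmt13

/-- `ε(F₁^m(G)) = (m − 2 + √(m² − 2m + 5)) · ε(G)` for `m > 3`; the adjacency
matrix of `F₁^m(G)` is the Kronecker product `B ⊗ A(G)`. -/
theorem stmt_13 (m : ℕ) (hm : 3 < m)
    (V : Type) [Fintype V] [DecidableEq V] (G : SimpleGraph V) [DecidableRel G.Adj] :
    matEnergy (Matrix.kroneckerMap (· * ·) (Bmat m) (G.adjMatrix ℝ)) =
      ((m : ℝ) - 2 + Real.sqrt ((m : ℝ) ^ 2 - 2 * (m : ℝ) + 5)) *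
        matEnergy (G.adjMatrix ℝ) := by
  have hA : (G.adjMatrix ℝ).IsHermitian := by
    ext i j
    simp only [conjTranspose_apply, star_trivial]
    exact congrFun (congrFun (G.isSymm_adjMatrix (α := ℝ)) i) j
  rw [matEnergy_kronecker (Bmat m) (G.adjMatrix ℝ) (Bmat_isHermitian m) hA,
    sum_abs_eigen hm]

end
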